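/- arXiv:2509.00880 — 2 statements merged into one kernel-verified Lean document; each statement's English description precedes it below -/
import Mathlib

section
/- The 19 triangular lattice points in a closed regular hexagon of side length 2 form an 8-distance set: the set of squared pairwise distances between distinct points is exactly {1, 3, 4, 7, 9, 12, 13, 16}. -/
/-- Triangular lattice point a•(1,0) + b•(1/2, √3/2). -/
noncomputable def tri (a b : ℤ) : ℝ × ℝ :=
  ((a : ℝ) + (b : ℝ) / 2, (b : ℝ) * Real.sqrt 3 / 2)

/-- Squared Euclidean distance in the plane. -/
def sqd (p q : ℝ × ℝ) : ℝ := (p.1 - q.1) ^ 2 + (p.2 - q.2) ^ 2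

/-- The triangular lattice. -/
noncomputable def triLattice : Set (ℝ × ℝ) := {p | ∃ a b : ℤ, p = tri a b}

/-- Closed regular hexagon of side `k` centered at the origin with a vertex at `(k,0)`. -/
noncomputable def hexR (k : ℤ) : Set (ℝ × ℝ) :=
  convexHull ℝ ({tri k 0, tri 0 k, tri (-k) k, tri (-k) 0, tri 0 (-k), tri k (-k)} : Set (ℝ × ℝ))

/-- Closed (k, k+1)-equiangular hexagon with vertices at lattice points. -/
noncomputable def hexE (k : ℤ) : Set (ℝ × ℝ) :=
  convexHull ℝ ({tri k 0, tri k (k+1), tri 0 (2*k+1), tri (-(k+1)) (2*k+1),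
    tri (-(k+1)) (k+1), tri 0 0} : Set (ℝ × ℝ))

/-- Set of squared distances between distinct points of `X`. -/
def sqdSet (X : Set (ℝ × ℝ)) : Set ℝ := {d | ∃ p ∈ X, ∃ q ∈ X, p ≠ q ∧ d = sqd p q}

/-!
The map `(a, b) ↦ a • (1, 0) + b • (1/2, √3/2)` extends to an injective linear map of the
plane, which carries convex hulls to convex hulls. In lattice coordinates the hexagon of side
`k` is therefore the convex hull of `(±k, 0)`, `(0, ±k)`, `±(k, -k)`, which is cut out by
`|a|, |b|, |a + b| ≤ k`: one inclusion because this set is convex, the other by writing each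
point as a combination of `0` and two adjacent vertices. So the lattice points of `hexR 2` are
the 19 integer pairs with `|a|, |b|, |a + b| ≤ 2`, and the squared distance between two of them is
the Löschian form `u² + uv + v²` of their difference, whose values on the 342 ordered pairs of
distinct points are checked by direct computation.
-/

lemma Convex.smul_add_smul_mem_of_zero_mem {𝕜 E : Type*} [Field 𝕜] [LinearOrder 𝕜]
    [IsStrictOrderedRing 𝕜] [AddCommGroup E] [Module 𝕜 E] {C : Set E} (hC : Convex 𝕜 C)
    (h0 : 0 ∈ C) {v w : E} (hv : v ∈ C) (hw : w ∈ C) {α β : 𝕜} (hα : 0 ≤ α) (hβ : 0 ≤ β)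
    (hαβ : α + β ≤ 1) : α • v + β • w ∈ C := by
  rcases (add_nonneg hα hβ).eq_or_lt with hs | hs
  · obtain ⟨rfl, rfl⟩ : α = 0 ∧ β = 0 := ⟨by linarith, by linarith⟩
    simpa using h0
  have hmem : (α / (α + β)) • v + (β / (α + β)) • w ∈ C :=
    hC hv hw (by positivity) (by positivity) (by field_simp)
  convert hC.smul_mem_of_zero_mem h0 hmem ⟨hs.le, hαβ⟩ using 1
  rw [smul_add, smul_smul, smul_smul, mul_div_cancel₀ _ hs.ne', mul_div_cancel₀ _ hs.ne']

noncomputable def triMap : ℝ × ℝ →ₗ[ℝ] ℝ × ℝ where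
  toFun p := (p.1 + p.2 / 2, p.2 * Real.sqrt 3 / 2)
  map_add' p q := by ext <;> simp <;> ring
  map_smul' c p := by ext <;> simp <;> ring

lemma tri_eq_triMap (a b : ℤ) : tri a b = triMap (a, b) := rfl

lemma triMap_injective : Function.Injective triMap := by
  rw [← LinearMap.ker_eq_bot, LinearMap.ker_eq_bot']
  rintro ⟨x, y⟩ h
  simp only [triMap, LinearMap.coe_mk, AddHom.coe_mk, Prod.mk_eq_zero] at h
  obtain ⟨hx, hy⟩ := h
  obtain rfl : y = 0 := by simpa using hy
  simp_all

lemma tri_injective : Function.Injective fun p : ℤ × ℤ => tri p.1 p.2 := by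
  intro p q h
  have h' : triMap ((p.1 : ℝ), (p.2 : ℝ)) = triMap (q.1, q.2) := h
  simpa [Prod.ext_iff] using triMap_injective h'

def loeschianForm (p : ℤ × ℤ) : ℤ := p.1 ^ 2 + p.1 * p.2 + p.2 ^ 2

lemma sqd_tri (a b c d : ℤ) : sqd (tri a b) (tri c d) = loeschianForm (a - c, b - d) := by
  have h3 : Real.sqrt 3 ^ 2 = 3 := Real.sq_sqrt (by norm_num)
  simp only [sqd, tri, loeschianForm]
  push_cast
  linear_combination ((b - d : ℝ) ^ 2 / 4) * h3

def coordHexagon (k : ℝ) : Set (ℝ × ℝ) :=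
  convexHull ℝ {(k, 0), (0, k), (-k, k), (-k, 0), (0, -k), (k, -k)}

lemma hexR_eq_image (k : ℤ) : hexR k = triMap '' coordHexagon k := by
  rw [hexR, coordHexagon, LinearMap.image_convexHull]
  simp [Set.image_insert_eq, tri_eq_triMap]

lemma coordHexagon_subset {k : ℝ} (hk : 0 ≤ k) :
    coordHexagon k ⊆ {q | |q.1| ≤ k ∧ |q.2| ≤ k ∧ |q.1 + q.2| ≤ k} := by
  refine convexHull_min ?_ ?_
  · intro q hq
    simp only [Set.mem_insert_iff, Set.mem_singleton_iff] at hq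
    rcases hq with rfl | rfl | rfl | rfl | rfl | rfl <;> simp [abs_le, hk]
  · have hI : Convex ℝ (Set.Icc (-k) k) := convex_Icc (-k) k
    simp only [abs_le, ← Set.mem_Icc, Set.ofPred_and]
    exact (hI.linear_preimage (LinearMap.fst ℝ ℝ ℝ)).inter
      ((hI.linear_preimage (LinearMap.snd ℝ ℝ ℝ)).inter
        (hI.linear_preimage (LinearMap.fst ℝ ℝ ℝ + LinearMap.snd ℝ ℝ ℝ)))

def hexDirections : Set (ℝ × ℝ) := {(1, 0), (0, 1), (-1, 1), (-1, 0), (0, -1), (1, -1)}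

lemma smul_mem_coordHexagon (k : ℝ) {u : ℝ × ℝ} (hu : u ∈ hexDirections) :
    k • u ∈ coordHexagon k := by
  apply subset_convexHull
  simp only [hexDirections, Set.mem_insert_iff, Set.mem_singleton_iff] at hu
  rcases hu with rfl | rfl | rfl | rfl | rfl | rfl <;> simp

lemma convex_coordHexagon (k : ℝ) : Convex ℝ (coordHexagon k) := convex_convexHull ℝ _

lemma zero_mem_coordHexagon (k : ℝ) : (0 : ℝ × ℝ) ∈ coordHexagon k := by
  have h := convex_coordHexagon k (smul_mem_coordHexagon k (u := (1, 0)) (by simp [hexDirections]))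
    (smul_mem_coordHexagon k (u := (-1, 0)) (by simp [hexDirections]))
    (by norm_num : (0 : ℝ) ≤ 1 / 2) (by norm_num : (0 : ℝ) ≤ 1 / 2) (by norm_num)
  convert h using 1
  ext <;> simp

lemma smul_add_smul_mem_coordHexagon {k : ℝ} (hk : 0 < k) {u u' : ℝ × ℝ}
    (hu : u ∈ hexDirections) (hu' : u' ∈ hexDirections) {α β : ℝ} (hα : 0 ≤ α) (hβ : 0 ≤ β)
    (hαβ : α + β ≤ k) : α • u + β • u' ∈ coordHexagon k := by
  have h := (convex_coordHexagon k).smul_add_smul_mem_of_zero_mem (zero_mem_coordHexagon k)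
    (smul_mem_coordHexagon k hu) (smul_mem_coordHexagon k hu') (div_nonneg hα hk.le)
    (div_nonneg hβ hk.le) (by rwa [← add_div, div_le_one hk])
  rwa [smul_smul, smul_smul, div_mul_cancel₀ _ hk.ne', div_mul_cancel₀ _ hk.ne'] at h

lemma mem_coordHexagon_of_abs_le {k : ℝ} (hk : 0 ≤ k) {q : ℝ × ℝ}
    (h : |q.1| ≤ k ∧ |q.2| ≤ k ∧ |q.1 + q.2| ≤ k) : q ∈ coordHexagon k := by
  obtain ⟨x, y⟩ := q
  simp only [abs_le] at h
  obtain ⟨⟨hx, hx'⟩, ⟨hy, hy'⟩, ⟨hxy, hxy'⟩⟩ := h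
  rcases hk.eq_or_lt with rfl | hk
  · obtain ⟨rfl, rfl⟩ : x = 0 ∧ y = 0 := ⟨by linarith, by linarith⟩
    exact zero_mem_coordHexagon 0
  have sector : ∀ u ∈ hexDirections, ∀ u' ∈ hexDirections, ∀ α β : ℝ, 0 ≤ α → 0 ≤ β →
      α + β ≤ k → (x, y) = α • u + β • u' → (x, y) ∈ coordHexagon k := by
    rintro u hu u' hu' α β hα hβ hαβ hq
    rw [hq]
    exact smul_add_smul_mem_coordHexagon hk hu hu' hα hβ hαβ
  -- The signs of `x`, `y` and `x + y` determine the sector of the hexagon containing `(x, y)`,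
  -- and there `(x, y)` is a nonnegative combination of the sector's two boundary directions.
  rcases le_total 0 x with hx0 | hx0 <;> rcases le_total 0 y with hy0 | hy0
  · exact sector (1, 0) (by simp [hexDirections]) (0, 1) (by simp [hexDirections]) x y hx0 hy0 hxy'
      (by ext <;> simp)
  · rcases le_total 0 (x + y) with hs | hs
    · exact sector (1, -1) (by simp [hexDirections]) (1, 0) (by simp [hexDirections]) (-y) (x + y)
        (by linarith) hs (by linarith) (by ext <;> simp)
    · exact sector (0, -1) (by simp [hexDirections]) (1, -1) (by simp [hexDirections]) (-(x + y)) x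
        (by linarith) hx0 (by linarith) (by ext <;> simp)
  · rcases le_total 0 (x + y) with hs | hs
    · exact sector (0, 1) (by simp [hexDirections]) (-1, 1) (by simp [hexDirections]) (x + y) (-x)
        hs (by linarith) (by linarith) (by ext <;> simp)
    · exact sector (-1, 1) (by simp [hexDirections]) (-1, 0) (by simp [hexDirections]) y (-(x + y))
        hy0 (by linarith) (by linarith) (by ext <;> simp)
  · exact sector (-1, 0) (by simp [hexDirections]) (0, -1) (by simp [hexDirections]) (-x) (-y)
      (by linarith) (by linarith) (by linarith) (by ext <;> simp)

lemma mem_coordHexagon_iff {k : ℝ} (hk : 0 ≤ k) {q : ℝ × ℝ} :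
    q ∈ coordHexagon k ↔ |q.1| ≤ k ∧ |q.2| ≤ k ∧ |q.1 + q.2| ≤ k :=
  ⟨fun h => coordHexagon_subset hk h, mem_coordHexagon_of_abs_le hk⟩

lemma tri_mem_hexR_iff {k : ℤ} (hk : 0 ≤ k) {a b : ℤ} :
    tri a b ∈ hexR k ↔ |a| ≤ k ∧ |b| ≤ k ∧ |a + b| ≤ k := by
  rw [hexR_eq_image, tri_eq_triMap, triMap_injective.mem_set_image,
    mem_coordHexagon_iff (by exact_mod_cast hk)]
  dsimp only
  norm_cast

noncomputable def hexPoints (k : ℤ) : Finset (ℤ × ℤ) :=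
  (Finset.Icc (-k) k ×ˢ Finset.Icc (-k) k).filter fun p => |p.1 + p.2| ≤ k

lemma mem_hexPoints {k : ℤ} {p : ℤ × ℤ} :
    p ∈ hexPoints k ↔ |p.1| ≤ k ∧ |p.2| ≤ k ∧ |p.1 + p.2| ≤ k := by
  simp [hexPoints, abs_le, and_assoc]

lemma triLattice_inter_hexR {k : ℤ} (hk : 0 ≤ k) :
    triLattice ∩ hexR k = ((hexPoints k).image fun p => tri p.1 p.2 : Set (ℝ × ℝ)) := by
  ext z
  simp only [triLattice, Finset.coe_image, Set.mem_inter_iff, Set.mem_ofPred_eq, Set.mem_image,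
    Finset.mem_coe, Prod.exists]
  constructor
  · rintro ⟨⟨a, b, rfl⟩, h⟩
    exact ⟨a, b, mem_hexPoints.2 ((tri_mem_hexR_iff hk).1 h), rfl⟩
  · rintro ⟨a, b, h, rfl⟩
    exact ⟨⟨a, b, rfl⟩, (tri_mem_hexR_iff hk).2 (mem_hexPoints.1 h)⟩

lemma sqdSet_image_tri (S : Finset (ℤ × ℤ)) :
    sqdSet ((S.image fun p => tri p.1 p.2 : Finset (ℝ × ℝ)) : Set (ℝ × ℝ)) =
      Int.cast '' ((S.offDiag.image fun x => loeschianForm (x.1 - x.2) : Finset ℤ) : Set ℤ) := by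
  ext r
  simp only [sqdSet, Finset.coe_image, Set.mem_image, Finset.mem_coe, Set.mem_ofPred_eq,
    Finset.mem_offDiag]
  constructor
  · rintro ⟨_, ⟨⟨a, b⟩, hab, rfl⟩, _, ⟨⟨c, d⟩, hcd, rfl⟩, hne, rfl⟩
    refine ⟨_, ⟨((a, b), (c, d)), ⟨hab, hcd, ?_⟩, rfl⟩, (sqd_tri a b c d).symm⟩
    rintro ⟨⟩
    exact hne rfl
  · rintro ⟨_, ⟨⟨⟨a, b⟩, ⟨c, d⟩⟩, ⟨hab, hcd, hne⟩, rfl⟩, rfl⟩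
    exact ⟨_, ⟨(a, b), hab, rfl⟩, _, ⟨(c, d), hcd, rfl⟩, fun h => hne (tri_injective h),
      (sqd_tri a b c d).symm⟩

lemma card_hexPoints_two : (hexPoints 2).card = 19 := by decide +kernel

lemma image_loeschianForm_offDiag_hexPoints_two :
    ((hexPoints 2).offDiag.image fun x => loeschianForm (x.1 - x.2)) =
      {1, 3, 4, 7, 9, 12, 13, 16} := by
  decide +kernel

theorem hexagon_side2_eight_distance :
    (triLattice ∩ hexR 2).ncard = 19 ∧
      sqdSet (triLattice ∩ hexR 2) = {1, 3, 4, 7, 9, 12, 13, 16} := by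
  rw [triLattice_inter_hexR (by norm_num)]
  refine ⟨?_, ?_⟩
  · rw [Set.ncard_coe_finset, Finset.card_image_of_injective _ tri_injective, card_hexPoints_two]
  · rw [sqdSet_image_tri, image_loeschianForm_offDiag_hexPoints_two]
    simp [Set.image_insert_eq]
end

section
/- The 91 triangular lattice points of a regular hexagon of side length 5 form a 34-distance set, and its largest squared distance, 100, is not among the 34 smallest positive Löschian numbers. -/
/-!
In the lattice coordinates `(a, b) ↦ tri a b` the hexagon of side `k` becomes
`{|a| ≤ k, |b| ≤ k, |a + b| ≤ k}`, and the squared distance between the points with coordinates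
`p` and `q` is the Löschian form of `p - q`. The differences of lattice points of the side-`k`
hexagon are exactly the lattice points of the side-`2k` hexagon, so the squared distances are the
values of the Löschian form at the 330 nonzero lattice points of the side-10 hexagon, a finite
computation.
-/

open Set Pointwise Function

def loschian (p : ℤ × ℤ) : ℤ := p.1 ^ 2 + p.1 * p.2 + p.2 ^ 2

noncomputable def triLinearMap : ℝ × ℝ →ₗ[ℝ] ℝ × ℝ where
  toFun p := (p.1 + p.2 / 2, p.2 * Real.sqrt 3 / 2)
  map_add' p q := by ext <;> simp only [Prod.fst_add, Prod.snd_add] <;> ring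
  map_smul' c p := by
    ext <;> simp only [Prod.smul_fst, Prod.smul_snd, smul_eq_mul, RingHom.id_apply] <;> ring

lemma uncurry_tri_eq_triLinearMap (p : ℤ × ℤ) : uncurry tri p = triLinearMap (p.1, p.2) := rfl

lemma triLinearMap_injective : Injective triLinearMap := by
  rintro ⟨x, y⟩ ⟨x', y'⟩ h
  obtain ⟨h₁, h₂⟩ := Prod.mk.inj h
  have hy : y = y' := by simpa [(Real.sqrt_pos.2 three_pos).ne'] using h₂
  exact Prod.ext (by linarith) hy

lemma uncurry_tri_injective : Injective (uncurry tri) := by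
  intro p q h
  rw [uncurry_tri_eq_triLinearMap, uncurry_tri_eq_triLinearMap] at h
  simpa [Prod.ext_iff] using triLinearMap_injective h

lemma sqd_uncurry_tri (p q : ℤ × ℤ) : sqd (uncurry tri p) (uncurry tri q) = loschian (p - q) := by
  obtain ⟨a, b⟩ := p
  obtain ⟨c, d⟩ := q
  have h3 : Real.sqrt 3 ^ 2 = 3 := Real.sq_sqrt (by norm_num)
  simp only [sqd, uncurry_apply_pair, tri, loschian, Prod.mk_sub_mk]
  push_cast
  linear_combination ((b : ℝ) - d) ^ 2 / 4 * h3

lemma sqdSet_image_uncurry_tri (s : Set (ℤ × ℤ)) :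
    sqdSet (uncurry tri '' s) = (fun d => (loschian d : ℝ)) '' ((s - s) \ {0}) := by
  ext x
  simp only [sqdSet, mem_image, mem_sdiff, mem_sub, mem_singleton_iff]
  constructor
  · rintro ⟨_, ⟨p, hp, rfl⟩, _, ⟨q, hq, rfl⟩, hpq, rfl⟩
    exact ⟨p - q, ⟨⟨p, hp, q, hq, rfl⟩, sub_ne_zero.2 (ne_of_apply_ne _ hpq)⟩,
      (sqd_uncurry_tri p q).symm⟩
  · rintro ⟨_, ⟨⟨p, hp, q, hq, rfl⟩, hpq⟩, rfl⟩
    exact ⟨_, ⟨p, hp, rfl⟩, _, ⟨q, hq, rfl⟩, uncurry_tri_injective.ne (sub_ne_zero.1 hpq),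
      (sqd_uncurry_tri p q).symm⟩

def hexagonVertices (k : ℝ) : Set (ℝ × ℝ) :=
  {(k, 0), (0, k), (-k, k), (-k, 0), (0, -k), (k, -k)}

lemma Convex.smul_add_smul_mem_of_zero_mem_s19 {𝕜 E : Type*} [Field 𝕜] [LinearOrder 𝕜]
    [IsStrictOrderedRing 𝕜] [AddCommGroup E] [Module 𝕜 E] {s : Set E}
    (hs : Convex 𝕜 s) (h0 : 0 ∈ s) {u v : E} (hu : u ∈ s) (hv : v ∈ s) {a b : 𝕜}
    (ha : 0 ≤ a) (hb : 0 ≤ b) (hab : a + b ≤ 1) : a • u + b • v ∈ s := by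
  rcases (add_nonneg ha hb).eq_or_lt with h | h
  · obtain ⟨rfl, rfl⟩ : a = 0 ∧ b = 0 := ⟨by linarith, by linarith⟩
    simpa using h0
  have hw : (a / (a + b)) • u + (b / (a + b)) • v ∈ s :=
    hs hu hv (by positivity) (by positivity) (by field_simp)
  convert (hs.starConvex h0).smul_mem hw h.le hab using 1
  simp only [smul_add, smul_smul]
  congr 2 <;> field_simp

lemma smul_add_smul_mem_convexHull_hexagonVertices {k s t : ℝ} {e f : ℝ × ℝ} (hk : 0 < k)
    (he : k • e ∈ hexagonVertices k) (hf : k • f ∈ hexagonVertices k)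
    (hs : 0 ≤ s) (ht : 0 ≤ t) (hst : s + t ≤ k) :
    s • e + t • f ∈ convexHull ℝ (hexagonVertices k) := by
  have hmem := subset_convexHull ℝ (hexagonVertices k)
  have h0 : (0 : ℝ × ℝ) ∈ convexHull ℝ (hexagonVertices k) := by
    convert convex_convexHull ℝ _ (hmem (by simp [hexagonVertices] : (k, 0) ∈ hexagonVertices k))
      (hmem (by simp [hexagonVertices] : (-k, 0) ∈ hexagonVertices k))
      (by norm_num : (0 : ℝ) ≤ 1 / 2) (by norm_num : (0 : ℝ) ≤ 1 / 2) (by norm_num) using 1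
    ext <;> simp
  convert (convex_convexHull ℝ _).smul_add_smul_mem_of_zero_mem_s19 h0 (hmem he) (hmem hf)
    (a := s / k) (b := t / k) (by positivity) (by positivity)
    (by rw [← add_div, div_le_one hk]; exact hst) using 1
  simp only [smul_smul, div_mul_cancel₀ _ hk.ne']

lemma convexHull_hexagonVertices {k : ℝ} (hk : 0 < k) :
    convexHull ℝ (hexagonVertices k) =
      {p | p.1 ∈ Icc (-k) k ∧ p.2 ∈ Icc (-k) k ∧ p.1 + p.2 ∈ Icc (-k) k} := by
  apply (convexHull_min ?_ ?_).antisymm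
  · rintro ⟨x, y⟩ ⟨⟨hx₁, hx₂⟩, ⟨hy₁, hy₂⟩, ⟨hs₁, hs₂⟩⟩
    -- The signs of `x`, `y`, `x + y` cut the hexagon into six triangles, each spanned by `0` and
    -- two adjacent vertices `k • e`, `k • f`.
    have sector (e f : ℝ × ℝ) (s t : ℝ) (he : k • e ∈ hexagonVertices k)
        (hf : k • f ∈ hexagonVertices k) (hs : 0 ≤ s) (ht : 0 ≤ t) (hst : s + t ≤ k) :=
      smul_add_smul_mem_convexHull_hexagonVertices hk he hf hs ht hst
    rcases le_total 0 x with hx | hx <;> rcases le_total 0 y with hy | hy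
    · simpa using sector (1, 0) (0, 1) x y (by simp [hexagonVertices]) (by simp [hexagonVertices])
        hx hy hs₂
    · rcases le_total 0 (x + y) with hxy | hxy
      · simpa using sector (1, -1) (1, 0) (-y) (x + y) (by simp [hexagonVertices])
          (by simp [hexagonVertices]) (by linarith) hxy (by linarith)
      · simpa using sector (0, -1) (1, -1) (-(x + y)) x (by simp [hexagonVertices])
          (by simp [hexagonVertices]) (by linarith) hx (by linarith)
    · rcases le_total 0 (x + y) with hxy | hxy
      · simpa using sector (0, 1) (-1, 1) (x + y) (-x) (by simp [hexagonVertices])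
          (by simp [hexagonVertices]) hxy (by linarith) (by linarith)
      · simpa using sector (-1, 1) (-1, 0) y (-(x + y)) (by simp [hexagonVertices])
          (by simp [hexagonVertices]) hy (by linarith) (by linarith)
    · simpa using sector (-1, 0) (0, -1) (-x) (-y) (by simp [hexagonVertices])
        (by simp [hexagonVertices]) (by linarith) (by linarith) (by linarith)
  · simp [hexagonVertices, insert_subset_iff, hk.le]
  · exact ((convex_Icc _ _).linear_preimage (LinearMap.fst ℝ ℝ ℝ)).inter
      (((convex_Icc _ _).linear_preimage (LinearMap.snd ℝ ℝ ℝ)).inter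
        ((convex_Icc _ _).linear_preimage (LinearMap.fst ℝ ℝ ℝ + LinearMap.snd ℝ ℝ ℝ)))

lemma hexR_eq_image_convexHull (k : ℤ) :
    hexR k = triLinearMap '' convexHull ℝ (hexagonVertices k) := by
  rw [LinearMap.image_convexHull, hexR, hexagonVertices]
  simp [image_insert_eq, tri, triLinearMap]

noncomputable def hexagonLatticeCoords (k : ℤ) : Finset (ℤ × ℤ) :=
  (Finset.Icc (-k) k ×ˢ Finset.Icc (-k) k).filter fun p => p.1 + p.2 ∈ Finset.Icc (-k) k

lemma mem_hexagonLatticeCoords {k : ℤ} {p : ℤ × ℤ} :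
    p ∈ hexagonLatticeCoords k ↔
      -k ≤ p.1 ∧ p.1 ≤ k ∧ -k ≤ p.2 ∧ p.2 ≤ k ∧ -k ≤ p.1 + p.2 ∧ p.1 + p.2 ≤ k := by
  simp only [hexagonLatticeCoords, Finset.mem_filter, Finset.mem_product, Finset.mem_Icc, and_assoc]

lemma hexagonLatticeCoords_sub_self (k : ℤ) :
    (hexagonLatticeCoords k : Set (ℤ × ℤ)) - hexagonLatticeCoords k =
      hexagonLatticeCoords (2 * k) := by
  ext d
  simp only [mem_sub, Finset.mem_coe, mem_hexagonLatticeCoords]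
  constructor
  · rintro ⟨p, hp, q, hq, rfl⟩
    simp only [Prod.fst_sub, Prod.snd_sub]
    omega
  · intro hd
    -- `d = p - q` with `p = (⌈d₁/2⌉, ⌊d₂/2⌋)` and `q = -(⌊d₁/2⌋, ⌈d₂/2⌉)`
    refine ⟨(d.1 - d.1 / 2, d.2 / 2), ?_, (-(d.1 / 2), d.2 / 2 - d.2), ?_, ?_⟩
    · dsimp only; omega
    · dsimp only; omega
    · ext <;> simp only [Prod.fst_sub, Prod.snd_sub] <;> ring

lemma uncurry_tri_mem_hexR_iff {k : ℤ} (hk : 0 < k) {p : ℤ × ℤ} :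
    uncurry tri p ∈ hexR k ↔ p ∈ hexagonLatticeCoords k := by
  rw [uncurry_tri_eq_triLinearMap, hexR_eq_image_convexHull, triLinearMap_injective.mem_set_image,
    convexHull_hexagonVertices (by exact_mod_cast hk), mem_hexagonLatticeCoords]
  simp only [mem_ofPred_eq, mem_Icc]
  norm_cast
  tauto

lemma triLattice_inter_hexR_s19 {k : ℤ} (hk : 0 < k) :
    triLattice ∩ hexR k = uncurry tri '' hexagonLatticeCoords k := by
  ext x
  constructor
  · rintro ⟨⟨a, b, rfl⟩, hx⟩
    exact ⟨(a, b), (uncurry_tri_mem_hexR_iff hk).1 hx, rfl⟩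
  · rintro ⟨p, hp, rfl⟩
    exact ⟨⟨p.1, p.2, rfl⟩, (uncurry_tri_mem_hexR_iff hk).2 hp⟩

lemma sqdSet_triLattice_inter_hexR {k : ℤ} (hk : 0 < k) :
    sqdSet (triLattice ∩ hexR k) =
      ((↑) : ℤ → ℝ) '' ↑(((hexagonLatticeCoords (2 * k)).erase 0).image loschian) := by
  rw [triLattice_inter_hexR_s19 hk, sqdSet_image_uncurry_tri, hexagonLatticeCoords_sub_self,
    Finset.coe_image, Finset.coe_erase, image_image]

set_option maxRecDepth 100000 in
lemma thirtyFour_le_ncard_loschian_lt_hundred :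
    34 ≤ Set.ncard {n : ℕ | 0 < n ∧ n < 100 ∧ ∃ a b : ℕ, n = a ^ 2 + a * b + b ^ 2} := by
  set L := {n : ℕ | 0 < n ∧ n < 100 ∧ ∃ a b : ℕ, n = a ^ 2 + a * b + b ^ 2}
  set T := ((Finset.range 10 ×ˢ Finset.range 10).image
    fun p => p.1 ^ 2 + p.1 * p.2 + p.2 ^ 2).filter fun n => 0 < n ∧ n < 100
  have hT : (T : Set ℕ) ⊆ L := by
    intro n hn
    simp only [T, Finset.coe_filter, Finset.mem_image, mem_ofPred_eq] at hn
    obtain ⟨⟨p, -, rfl⟩, hn⟩ := hn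
    exact ⟨hn.1, hn.2, p.1, p.2, rfl⟩
  have hL : L.Finite := (finite_lt_nat 100).subset fun n hn => hn.2.1
  calc 34 ≤ T.card := by decide
    _ = (T : Set ℕ).ncard := (ncard_coe_finset T).symm
    _ ≤ L.ncard := ncard_le_ncard hT hL

set_option maxRecDepth 100000 in
theorem hexagon_side5_thirtyfour_distance :
    (triLattice ∩ hexR 5).ncard = 91 ∧
      (sqdSet (triLattice ∩ hexR 5)).ncard = 34 ∧
      (100 : ℝ) ∈ sqdSet (triLattice ∩ hexR 5) ∧
      (∀ d ∈ sqdSet (triLattice ∩ hexR 5), d ≤ 100) ∧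
      34 ≤ Set.ncard {n : ℕ | 0 < n ∧ n < 100 ∧ ∃ a b : ℕ, n = a ^ 2 + a * b + b ^ 2} := by
  rw [sqdSet_triLattice_inter_hexR (by norm_num), triLattice_inter_hexR_s19 (by norm_num),
    ncard_image_of_injective _ uncurry_tri_injective,
    ncard_image_of_injective _ Int.cast_injective, ncard_coe_finset, ncard_coe_finset]
  refine ⟨by decide, by decide, ⟨100, by decide, by norm_num⟩, ?_,
    thirtyFour_le_ncard_loschian_lt_hundred⟩
  rintro _ ⟨n, hn, rfl⟩
  exact_mod_cast (by decide : ∀ n ∈ ((hexagonLatticeCoords (2 * 5)).erase 0).image loschian,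
    n ≤ 100) n hn
end
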